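/- arXiv:1411.0210 — 3 statements merged into one kernel-verified Lean document; each statement's English description precedes it below -/
import Mathlib

section
/- Let A be a symmetric n×n real matrix with zero row sums for its Laplacian A^L, and M = S·A^L·T. Suppose that a_{ij} ≥ a_{ik} whenever j < k < i, and a_{ij} ≤ a_{ik} whenever i < j < k. Then every off-diagonal entry of M is nonnegative; in fact, for i < j, M[i,j] = ∑_{k=j+1}^{n} (a_{ik} - a_{i+1,k}) ≥ 0, and for i > j, M[i,j] = ∑_{k=1}^{j} (a_{i+1,k} - a_{ik}) ≥ 0. -/
open Matrix Finset

/-- The (n)×(n+1) difference matrix: `S i i = -1`, `S i (i+1) = 1`, else `0`. -/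
noncomputable def Smat (n : ℕ) : Matrix (Fin n) (Fin (n + 1)) ℝ :=
  Matrix.of fun i j => if (j : ℕ) = (i : ℕ) then -1 else if (j : ℕ) = (i : ℕ) + 1 then 1 else 0

/-- The (n+1)×n cumulative-sum matrix: `T i j = 1` iff `j < i`. -/
noncomputable def Tmat (n : ℕ) : Matrix (Fin (n + 1)) (Fin n) ℝ :=
  Matrix.of fun i j => if (j : ℕ) < (i : ℕ) then 1 else 0

/-- The Laplacian associated with a symmetric matrix `A`:
off-diagonal entries `-A i j`, diagonal entry `∑_{k ≠ i} A i k`. -/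
noncomputable def lap {m : Type*} [Fintype m] [DecidableEq m] (A : Matrix m m ℝ) :
    Matrix m m ℝ :=
  Matrix.of fun i j => if i = j then ∑ k ∈ Finset.univ.filter (fun k => k ≠ i), A i k else -A i j

lemma lap_row_sum {m : Type*} [Fintype m] [DecidableEq m] (A : Matrix m m ℝ) (p : m) :
    ∑ q, lap A p q = 0 := by
  rw [← Finset.add_sum_erase Finset.univ _ (Finset.mem_univ p)]
  have h1 : lap A p p = ∑ k ∈ Finset.univ.erase p, A p k := by
    simp [lap, Finset.filter_ne']
  have h2 : ∑ q ∈ Finset.univ.erase p, lap A p q = ∑ q ∈ Finset.univ.erase p, (-A p q) := by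
    apply Finset.sum_congr rfl
    intro q hq
    simp only [Finset.mem_erase] at hq
    simp [lap, (Ne.symm hq.1 : p ≠ q)]
  rw [h1, h2]
  simp [Finset.sum_neg_distrib]

lemma SL_apply (n : ℕ) (A : Matrix (Fin (n+1)) (Fin (n+1)) ℝ) (i : Fin n) (q : Fin (n+1)) :
    (Smat n * lap A) i q = lap A i.succ q - lap A i.castSucc q := by
  rw [Matrix.mul_apply]
  have key : ∀ p : Fin (n+1), Smat n i p * lap A p q =
      (if p = i.succ then lap A i.succ q else 0) -
      (if p = i.castSucc then lap A i.castSucc q else 0) := by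
    intro p
    have hcs : ((i.castSucc : Fin (n+1)) : ℕ) = (i : ℕ) := rfl
    have hs : ((i.succ : Fin (n+1)) : ℕ) = (i : ℕ) + 1 := rfl
    rcases eq_or_ne p i.castSucc with h | h
    · subst h
      have : (i.castSucc : Fin (n+1)) ≠ i.succ := by
        simp [Fin.ext_iff]
      simp [Smat, this]
    · rcases eq_or_ne p i.succ with h2 | h2
      · subst h2
        have : ((i.succ : Fin (n+1)) : ℕ) ≠ (i : ℕ) := by simp
        simp [Smat, this, h]
      · have hp1 : (p : ℕ) ≠ (i : ℕ) := fun hh => h (Fin.ext hh)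
        have hp2 : (p : ℕ) ≠ (i : ℕ) + 1 := fun hh => h2 (Fin.ext hh)
        simp [Smat, hp1, hp2, h, h2]
  rw [Finset.sum_congr rfl (fun p _ => key p), Finset.sum_sub_distrib]
  simp

lemma M_apply (n : ℕ) (A : Matrix (Fin (n+1)) (Fin (n+1)) ℝ) (i j : Fin n) :
    (Smat n * lap A * Tmat n) i j =
      ∑ q ∈ Finset.univ.filter (fun q : Fin (n+1) => (j : ℕ) < (q : ℕ)),
        (lap A i.succ q - lap A i.castSucc q) := by
  rw [Matrix.mul_apply, Finset.sum_filter]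
  apply Finset.sum_congr rfl
  intro q _
  rw [SL_apply]
  simp [Tmat, mul_ite, mul_one, mul_zero]

theorem offdiag_nonneg (n : ℕ) (A : Matrix (Fin (n + 1)) (Fin (n + 1)) ℝ)
    (hA : A.IsSymm)
    (h1 : ∀ i j k : Fin (n + 1), (j : ℕ) < k → (k : ℕ) < i → A i k ≤ A i j)
    (h2 : ∀ i j k : Fin (n + 1), (i : ℕ) < j → (j : ℕ) < k → A i j ≤ A i k) :
    (∀ i j : Fin n, i ≠ j → 0 ≤ (Smat n * lap A * Tmat n) i j) ∧
    (∀ i j : Fin n, i < j →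
      (Smat n * lap A * Tmat n) i j =
        ∑ k ∈ Finset.univ.filter (fun k : Fin (n + 1) => (j : ℕ) < (k : ℕ)),
          (A i.castSucc k - A i.succ k) ∧
      0 ≤ (Smat n * lap A * Tmat n) i j) ∧
    (∀ i j : Fin n, j < i →
      (Smat n * lap A * Tmat n) i j =
        ∑ k ∈ Finset.univ.filter (fun k : Fin (n + 1) => (k : ℕ) ≤ (j : ℕ)),
          (A i.succ k - A i.castSucc k) ∧
      0 ≤ (Smat n * lap A * Tmat n) i j) := by
  have hsym : ∀ a b : Fin (n+1), A a b = A b a := fun a b => (hA.apply a b).symm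
  have key2 : ∀ i j : Fin n, i < j →
      (Smat n * lap A * Tmat n) i j =
        ∑ k ∈ Finset.univ.filter (fun k : Fin (n + 1) => (j : ℕ) < (k : ℕ)),
          (A i.castSucc k - A i.succ k) := by
    intro i j hij
    rw [M_apply]
    apply Finset.sum_congr rfl
    intro q hq
    simp only [Finset.mem_filter] at hq
    have hij' : (i : ℕ) < (j : ℕ) := hij
    have hq1 : i.succ ≠ q := by
      intro h
      have : ((i.succ : Fin (n+1)) : ℕ) = (q : ℕ) := by rw [h]
      simp only [Fin.val_succ] at this
      omega
    have hq2 : i.castSucc ≠ q := by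
      intro h
      have : ((i.castSucc : Fin (n+1)) : ℕ) = (q : ℕ) := by rw [h]
      simp only [Fin.coe_castSucc] at this
      omega
    have h2q : (j : ℕ) < (q : ℕ) := hq.2
    simp only [lap, Matrix.of_apply, if_neg hq1, if_neg hq2]
    ring
  have nonneg2 : ∀ i j : Fin n, i < j →
      0 ≤ ∑ k ∈ Finset.univ.filter (fun k : Fin (n + 1) => (j : ℕ) < (k : ℕ)),
          (A i.castSucc k - A i.succ k) := by
    intro i j hij
    apply Finset.sum_nonneg
    intro q hq
    simp only [Finset.mem_filter] at hq
    have hij' : (i : ℕ) < (j : ℕ) := hij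
    have hlt : ((i.succ : Fin (n+1)) : ℕ) < (q : ℕ) := by
      simp only [Fin.val_succ]; omega
    have hlt2 : ((i.castSucc : Fin (n+1)) : ℕ) < ((i.succ : Fin (n+1)) : ℕ) := by
      simp
    have := h1 q i.castSucc i.succ hlt2 hlt
    rw [hsym q i.succ, hsym q i.castSucc] at this
    linarith
  have key3 : ∀ i j : Fin n, j < i →
      (Smat n * lap A * Tmat n) i j =
        ∑ k ∈ Finset.univ.filter (fun k : Fin (n + 1) => (k : ℕ) ≤ (j : ℕ)),
          (A i.succ k - A i.castSucc k) := by
    intro i j hij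
    have hij' : (j : ℕ) < (i : ℕ) := hij
    rw [M_apply]
    have htot : ∑ q : Fin (n+1), (lap A i.succ q - lap A i.castSucc q) = 0 := by
      rw [Finset.sum_sub_distrib, lap_row_sum, lap_row_sum, sub_zero]
    rw [← Finset.sum_filter_add_sum_filter_not Finset.univ
      (fun q : Fin (n+1) => (j : ℕ) < (q : ℕ))] at htot
    have heq : Finset.univ.filter (fun q : Fin (n+1) => ¬ (j : ℕ) < (q : ℕ)) =
        Finset.univ.filter (fun q : Fin (n+1) => (q : ℕ) ≤ (j : ℕ)) := by
      apply Finset.filter_congr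
      intro q _
      simp [Nat.not_lt]
    rw [heq] at htot
    have : ∑ q ∈ Finset.univ.filter (fun q : Fin (n+1) => (j : ℕ) < (q : ℕ)),
        (lap A i.succ q - lap A i.castSucc q) =
        ∑ q ∈ Finset.univ.filter (fun q : Fin (n+1) => (q : ℕ) ≤ (j : ℕ)),
        (lap A i.castSucc q - lap A i.succ q) := by
      simp only [Finset.sum_sub_distrib] at htot ⊢
      linarith
    rw [this]
    apply Finset.sum_congr rfl
    intro q hq
    simp only [Finset.mem_filter] at hq
    have hq1 : i.succ ≠ q := by
      intro h
      have : ((i.succ : Fin (n+1)) : ℕ) = (q : ℕ) := by rw [h]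
      simp only [Fin.val_succ] at this
      omega
    have hq2 : i.castSucc ≠ q := by
      intro h
      have : ((i.castSucc : Fin (n+1)) : ℕ) = (q : ℕ) := by rw [h]
      simp only [Fin.coe_castSucc] at this
      omega
    simp only [lap, Matrix.of_apply, if_neg hq1, if_neg hq2]
    ring
  have nonneg3 : ∀ i j : Fin n, j < i →
      0 ≤ ∑ k ∈ Finset.univ.filter (fun k : Fin (n + 1) => (k : ℕ) ≤ (j : ℕ)),
          (A i.succ k - A i.castSucc k) := by
    intro i j hij
    apply Finset.sum_nonneg
    intro q hq
    simp only [Finset.mem_filter] at hq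
    have hij' : (j : ℕ) < (i : ℕ) := hij
    have hlt : (q : ℕ) < ((i.castSucc : Fin (n+1)) : ℕ) := by
      simp only [Fin.coe_castSucc]; omega
    have hlt2 : ((i.castSucc : Fin (n+1)) : ℕ) < ((i.succ : Fin (n+1)) : ℕ) := by
      simp
    have := h2 q i.castSucc i.succ hlt hlt2
    rw [hsym q i.succ, hsym q i.castSucc] at this
    linarith
  refine ⟨?_, fun i j hij => ⟨key2 i j hij, (key2 i j hij) ▸ nonneg2 i j hij⟩,
    fun i j hij => ⟨key3 i j hij, (key3 i j hij) ▸ nonneg3 i j hij⟩⟩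
  intro i j hij
  rcases lt_or_gt_of_ne hij with h | h
  · rw [key2 i j h]; exact nonneg2 i j h
  · rw [key3 i j h]; exact nonneg3 i j h
end

section
/- Let A be a symmetric nonnegative n×n real matrix with zero diagonal, satisfying a_{ij} ≤ a_{ik} whenever j < k < i and a_{ij} ≥ a_{ik} whenever i < j < k. Let 0 = λ_1 ≤ λ_2 ≤ ... ≤ λ_n be the eigenvalues of the Laplacian A^L. Then A^L has an eigenvector x corresponding to λ_2 (the second smallest eigenvalue) such that x is orthogonal to the all-ones vector and x_1 ≤ x_2 ≤ ... ≤ x_n. -/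
open Matrix Finset

/-!
Let `S` be the difference operator `(S x)ₖ = x_{k+1} - xₖ` and `T` its right inverse by cumulative
sums. If `L x = λ₂ x` with `x ⊥ 1`, then `z = S x` is a `λ₂`-eigenvector of `C = S L T`, and the
monotonicity of the rows of `A` makes the off-diagonal entries of `C` nonpositive; hence
`w = |z|` satisfies `C w ≤ λ₂ w`. Integrating `w` gives a monotone `y ⊥ 1` with `S y = w`, whose
tail sums `t = yᵀ T` are positive. Then `yᵀ L y - λ₂ yᵀ y = t ⬝ (C w - λ₂ w) ≤ 0`, while the
Rayleigh quotient of `L` on `1^⊥` is at least `λ₂`. So `C w = λ₂ w`, i.e. `S (L y) = S (λ₂ y)`,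
and as both sides sum to zero, `L y = λ₂ y`.
-/

section Laplacian

variable {m : Type*} [Fintype m] [DecidableEq m] (A : Matrix m m ℝ)

lemma lap_apply_of_ne {i j : m} (h : i ≠ j) : lap A i j = -A i j := by
  simp [lap, h]

lemma sum_lap_apply (i : m) : ∑ j, lap A i j = 0 := by
  rw [← add_sum_erase _ _ (mem_univ i),
    sum_congr rfl fun j hj => lap_apply_of_ne A (ne_of_mem_erase hj).symm]
  simp [lap, filter_ne']

lemma lap_mulVec_const (c : ℝ) : lap A *ᵥ (fun _ => c) = 0 := by
  ext i
  simp [mulVec, dotProduct, ← sum_mul, sum_lap_apply]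

lemma lap_isSymm (hA : A.IsSymm) : (lap A).IsSymm := by
  ext i j
  rcases eq_or_ne i j with rfl | h
  · rfl
  · rw [transpose_apply, lap_apply_of_ne A h, lap_apply_of_ne A h.symm, hA.apply]

lemma sum_lap_apply_of_notMem {s : Finset m} {i : m} (hi : i ∉ s) :
    ∑ j ∈ s, lap A i j = -∑ j ∈ s, A i j := by
  rw [← sum_neg_distrib]
  exact sum_congr rfl fun j hj => lap_apply_of_ne A (ne_of_mem_of_not_mem hj hi).symm

lemma sum_lap_apply_of_mem {s : Finset m} {i : m} (hi : i ∈ s) :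
    ∑ j ∈ s, lap A i j = ∑ j ∈ sᶜ, A i j := by
  have hrow := sum_lap_apply A i
  rw [← sum_add_sum_compl s, sum_lap_apply_of_notMem A (notMem_compl.2 hi)] at hrow
  linarith

end Laplacian

section Rayleigh

variable {m : Type*} [Fintype m] {M : Matrix m m ℝ} {lam : ℝ}

lemma sum_mulVec_eq_zero_of_isSymm (hM : M.IsSymm) (hM1 : M *ᵥ 1 = 0) (v : m → ℝ) :
    ∑ i, (M *ᵥ v) i = 0 := by
  rw [← one_dotProduct, dotProduct_mulVec, ← mulVec_transpose, hM.eq, hM1, zero_dotProduct]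

lemma le_of_mulVec_eq_smul_of_dotProduct_ne_zero (hM : M.IsSymm) (hM1 : M *ᵥ 1 = 0)
    (hmin : ∀ μ : ℝ, (∃ x : m → ℝ, x ≠ 0 ∧ M *ᵥ x = μ • x ∧ ∑ i, x i = 0) → lam ≤ μ)
    {μ : ℝ} {v y : m → ℝ} (hv : M *ᵥ v = μ • v) (hy : ∑ i, y i = 0) (hvy : v ⬝ᵥ y ≠ 0) :
    lam ≤ μ := by
  -- The projection `v - s • 1` of `v` onto `1^⊥` is still a `μ`-eigenvector,
  -- because `μ * ∑ v = ∑ M v = 0`.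
  set s := (∑ i, v i) / Fintype.card m
  have hμs : μ * s = 0 := by
    have := sum_mulVec_eq_zero_of_isSymm hM hM1 v
    simp only [hv, Pi.smul_apply, smul_eq_mul, ← mul_sum] at this
    rw [← mul_div_assoc, this, zero_div]
  refine hmin μ ⟨v - s • 1, fun h => hvy ?_, ?_, ?_⟩
  · rw [sub_eq_zero.1 h, smul_dotProduct, one_dotProduct, hy, smul_zero]
  · rw [mulVec_sub, mulVec_smul, hM1, smul_zero, sub_zero, hv, smul_sub, smul_smul, hμs,
      zero_smul, sub_zero]
  · rcases isEmpty_or_nonempty m with hm | hm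
    · simp
    · have hc : (Fintype.card m : ℝ) ≠ 0 := Nat.cast_ne_zero.2 Fintype.card_ne_zero
      simp [s, sum_sub_distrib, mul_div_cancel₀ _ hc]

lemma mul_dotProduct_self_le_dotProduct_mulVec (hM : M.IsSymm) (hM1 : M *ᵥ 1 = 0)
    (hmin : ∀ μ : ℝ, (∃ x : m → ℝ, x ≠ 0 ∧ M *ᵥ x = μ • x ∧ ∑ i, x i = 0) → lam ≤ μ)
    {y : m → ℝ} (hy : ∑ i, y i = 0) : lam * (y ⬝ᵥ y) ≤ y ⬝ᵥ (M *ᵥ y) := by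
  classical
  have hH : M.IsHermitian := isHermitian_iff_isSymm.2 hM
  set b := hH.eigenvectorBasis
  have parseval (u : m → ℝ) : y ⬝ᵥ u = ∑ i, (⇑(b i) ⬝ᵥ y) * (⇑(b i) ⬝ᵥ u) := by
    simpa [EuclideanSpace.inner_eq_star_dotProduct, dotProduct_comm] using
      (b.sum_inner_mul_inner (WithLp.toLp 2 y) (WithLp.toLp 2 u)).symm
  have hb (i : m) : ⇑(b i) ⬝ᵥ (M *ᵥ y) = hH.eigenvalues i * (⇑(b i) ⬝ᵥ y) := by
    rw [dotProduct_mulVec, ← mulVec_transpose, hM.eq, hH.mulVec_eigenvectorBasis, smul_dotProduct,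
      smul_eq_mul]
  rw [parseval y, parseval (M *ᵥ y), mul_sum]
  refine sum_le_sum fun i _ => ?_
  rw [hb]
  rcases eq_or_ne (⇑(b i) ⬝ᵥ y) 0 with h | h
  · simp [h]
  · have := le_of_mulVec_eq_smul_of_dotProduct_ne_zero hM hM1 hmin
      (hH.mulVec_eigenvectorBasis i) hy h
    nlinarith [mul_self_nonneg (⇑(b i) ⬝ᵥ y)]

end Rayleigh

section Differences

variable {n : ℕ}

lemma Smat_apply (k : Fin n) : Smat n k = Pi.single k.succ 1 - Pi.single k.castSucc 1 := by
  ext j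
  simp only [Smat, of_apply, Pi.sub_apply, Pi.single_apply, Fin.ext_iff, Fin.val_succ,
    Fin.val_castSucc]
  split_ifs <;> first | (exfalso; omega) | norm_num

lemma Smat_mulVec_apply (v : Fin (n + 1) → ℝ) (k : Fin n) :
    (Smat n *ᵥ v) k = v k.succ - v k.castSucc := by
  rw [mulVec, Smat_apply, sub_dotProduct, single_one_dotProduct, single_one_dotProduct]

lemma Smat_mul_apply {p : Type*} (B : Matrix (Fin (n + 1)) p ℝ) (k : Fin n) (l : p) :
    (Smat n * B) k l = B k.succ l - B k.castSucc l := by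
  simpa [mul_apply, mulVec, dotProduct] using Smat_mulVec_apply (fun j => B j l) k

lemma Smat_mulVec_const (c : ℝ) : Smat n *ᵥ (fun _ => c) = 0 := by
  ext k
  simp [Smat_mulVec_apply]

lemma Tmat_apply (i : Fin (n + 1)) (l : Fin n) :
    Tmat n i l = if l.castSucc < i then 1 else 0 := by
  simp [Tmat, Fin.lt_def]

lemma mul_Tmat_apply {p : Type*} (B : Matrix p (Fin (n + 1)) ℝ) (i : p) (l : Fin n) :
    (B * Tmat n) i l = ∑ j with l.castSucc < j, B i j := by
  simp [mul_apply, Tmat_apply, sum_filter]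

lemma vecMul_Tmat_apply (y : Fin (n + 1) → ℝ) (l : Fin n) :
    (y ᵥ* Tmat n) l = ∑ i with l.castSucc < i, y i := by
  simp [vecMul, dotProduct, Tmat_apply, sum_filter]

lemma Tmat_mulVec_apply_zero (w : Fin n → ℝ) : (Tmat n *ᵥ w) 0 = 0 := by
  simp [mulVec, dotProduct, Tmat_apply]

lemma Smat_mul_Tmat : Smat n * Tmat n = 1 := by
  ext k l
  rw [Smat_mul_apply, Tmat_apply, Tmat_apply, one_apply]
  simp only [Fin.lt_def, Fin.val_castSucc, Fin.val_succ, Fin.ext_iff]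
  split_ifs <;> first | (exfalso; omega) | norm_num

lemma eq_of_Smat_mulVec_eq_of_apply_zero_eq {u v : Fin (n + 1) → ℝ}
    (h : Smat n *ᵥ u = Smat n *ᵥ v) (h0 : u 0 = v 0) : u = v := by
  funext i
  induction i using Fin.induction with
  | zero => exact h0
  | succ k ih =>
    have := congrFun h k
    rw [Smat_mulVec_apply, Smat_mulVec_apply, ih] at this
    linarith

lemma Tmat_mulVec_Smat_mulVec (v : Fin (n + 1) → ℝ) :
    Tmat n *ᵥ (Smat n *ᵥ v) = v - fun _ => v 0 := by
  refine eq_of_Smat_mulVec_eq_of_apply_zero_eq ?_ ?_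
  · rw [mulVec_mulVec, Smat_mul_Tmat, one_mulVec, mulVec_sub, Smat_mulVec_const, sub_zero]
  · simp [Tmat_mulVec_apply_zero]

lemma eq_of_Smat_mulVec_eq_of_sum_eq {u v : Fin (n + 1) → ℝ}
    (h : Smat n *ᵥ u = Smat n *ᵥ v) (hs : ∑ i, u i = ∑ i, v i) : u = v := by
  have hconst : u - v = fun _ => u 0 - v 0 :=
    eq_of_Smat_mulVec_eq_of_apply_zero_eq (by rw [mulVec_sub, h, sub_self, Smat_mulVec_const]) rfl
  have hsum := congrArg (fun f => ∑ i, f i) hconst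
  simp only [Pi.sub_apply, sum_sub_distrib, hs, sub_self, sum_const, card_univ,
    Fintype.card_fin, nsmul_eq_mul] at hsum
  have hn : ((n + 1 : ℕ) : ℝ) ≠ 0 := by positivity
  have h0 : u 0 = v 0 := mul_left_cancel₀ hn (by linarith)
  exact sub_eq_zero.1 (hconst.trans (funext fun _ => sub_eq_zero.2 h0))

lemma exists_Smat_mulVec_eq_and_sum_eq_zero (w : Fin n → ℝ) :
    ∃ y : Fin (n + 1) → ℝ, Smat n *ᵥ y = w ∧ ∑ i, y i = 0 := by
  set c := (∑ i, (Tmat n *ᵥ w) i) / (n + 1)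
  refine ⟨Tmat n *ᵥ w - fun _ => c, ?_, ?_⟩
  · rw [mulVec_sub, Smat_mulVec_const, sub_zero, mulVec_mulVec, Smat_mul_Tmat, one_mulVec]
  · simp only [Pi.sub_apply, sum_sub_distrib, sum_const, card_univ, Fintype.card_fin,
      nsmul_eq_mul, c]
    push_cast
    field_simp
    ring

lemma monotone_iff_nonneg_Smat_mulVec {v : Fin (n + 1) → ℝ} :
    Monotone v ↔ 0 ≤ Smat n *ᵥ v := by
  simp [Fin.monotone_iff_le_succ, Pi.le_def, Smat_mulVec_apply]

lemma dotProduct_eq_vecMul_Tmat_dotProduct_Smat_mulVec {y : Fin (n + 1) → ℝ}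
    (hy : ∑ i, y i = 0) (u : Fin (n + 1) → ℝ) :
    y ⬝ᵥ u = (y ᵥ* Tmat n) ⬝ᵥ (Smat n *ᵥ u) := by
  rw [← dotProduct_mulVec, Tmat_mulVec_Smat_mulVec, dotProduct_sub]
  simp [dotProduct, ← sum_mul, hy]

end Differences

section Order

variable {ι : Type*} [Fintype ι]

lemma mulVec_abs_le_of_offDiag_nonpos [DecidableEq ι] {C : Matrix ι ι ℝ}
    (hC : ∀ k l, k ≠ l → C k l ≤ 0) {μ : ℝ} {z : ι → ℝ} (hz : C *ᵥ z = μ • z) :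
    C *ᵥ |z| ≤ μ • |z| := by
  intro k
  have hrow (v : ι → ℝ) : (C *ᵥ v) k = C k k * v k + ∑ l ∈ univ.erase k, C k l * v l := by
    rw [mulVec, dotProduct, ← add_sum_erase _ _ (mem_univ k)]
  have hzk : ∑ l ∈ univ.erase k, C k l * z l = (μ - C k k) * z k := by
    have := congrFun hz k
    rw [hrow, Pi.smul_apply, smul_eq_mul] at this
    linarith
  have hoff : ∑ l ∈ univ.erase k, C k l * |z l| ≤ -|(μ - C k k) * z k| :=
    calc ∑ l ∈ univ.erase k, C k l * |z l| = -∑ l ∈ univ.erase k, |C k l * z l| := by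
          rw [← sum_neg_distrib]
          refine sum_congr rfl fun l hl => ?_
          rw [abs_mul, abs_of_nonpos (hC k l (ne_of_mem_erase hl).symm), neg_mul, neg_neg]
      _ ≤ -|(μ - C k k) * z k| := neg_le_neg (hzk ▸ abs_sum_le_sum_abs _ _)
  rw [abs_mul] at hoff
  simp only [hrow, Pi.smul_apply, smul_eq_mul, Pi.abs_apply]
  nlinarith [neg_abs_le (μ - C k k), abs_nonneg (z k)]

lemma sum_filter_lt_pos_of_monotone [LinearOrder ι] {y : ι → ℝ} (hmono : Monotone y)
    (hsum : ∑ i, y i = 0) (hy : y ≠ 0) {a b : ι} (hab : a < b) :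
    0 < ∑ i with a < i, y i := by
  obtain ⟨p, hp⟩ : ∃ p, 0 < y p := by
    by_contra! h
    exact hy (funext fun i => (sum_eq_zero_iff_of_nonpos fun i _ => h i).1 hsum i (mem_univ i))
  rcases lt_or_ge (y a) 0 with ha | ha
  · have hhead : ∑ i with ¬a < i, y i < 0 :=
      sum_neg (fun i hi => (hmono (not_lt.1 (mem_filter.1 hi).2)).trans_lt ha) ⟨a, by simp⟩
    linarith [sum_filter_add_sum_filter_not univ (a < ·) y]
  · exact sum_pos' (fun i hi => ha.trans (hmono (mem_filter.1 hi).2.le))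
      ⟨max b p, by simp [hab], hp.trans_le (hmono (le_max_right b p))⟩

lemma eq_zero_of_dotProduct_nonpos {t d : ι → ℝ} (ht : ∀ i, 0 < t i) (hd : 0 ≤ d)
    (h : t ⬝ᵥ d ≤ 0) : d = 0 := by
  have hterm (i : ι) : 0 ≤ t i * d i := mul_nonneg (ht i).le (hd i)
  funext i
  have := (sum_eq_zero_iff_of_nonneg fun i _ => hterm i).1
    (le_antisymm h (sum_nonneg fun i _ => hterm i)) i (mem_univ i)
  exact (mul_eq_zero.1 this).resolve_left (ht i).ne'

end Order

section MonotoneLaplacian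

variable {n : ℕ} (A : Matrix (Fin (n + 1)) (Fin (n + 1)) ℝ)

lemma Smat_mul_lap_mul_Tmat_apply_nonpos (hA : A.IsSymm)
    (h1 : ∀ i j k : Fin (n + 1), (j : ℕ) < k → (k : ℕ) < i → A i j ≤ A i k)
    (h2 : ∀ i j k : Fin (n + 1), (i : ℕ) < j → (j : ℕ) < k → A i k ≤ A i j)
    {k l : Fin n} (hkl : k ≠ l) : (Smat n * lap A * Tmat n) k l ≤ 0 := by
  rw [Matrix.mul_assoc, Smat_mul_apply, mul_Tmat_apply, mul_Tmat_apply, sub_nonpos]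
  rcases lt_or_gt_of_ne hkl with h | h
  · rw [sum_lap_apply_of_notMem, sum_lap_apply_of_notMem, neg_le_neg_iff]
    · refine sum_le_sum fun j hj => ?_
      rw [← hA.apply k.castSucc j, ← hA.apply k.succ j]
      simp only [mem_filter, mem_univ, true_and, Fin.lt_def, Fin.val_castSucc] at h hj
      exact h1 j _ _ (by simp) (by simp; omega)
    all_goals
      simp only [mem_filter, mem_univ, true_and, Fin.lt_def, Fin.val_castSucc, Fin.val_succ] at h ⊢
      omega
  · rw [sum_lap_apply_of_mem, sum_lap_apply_of_mem]
    · refine sum_le_sum fun j hj => ?_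
      rw [← hA.apply k.castSucc j, ← hA.apply k.succ j]
      simp only [mem_compl, mem_filter, mem_univ, true_and, Fin.lt_def, Fin.val_castSucc] at h hj
      exact h2 j _ _ (by simp; omega) (by simp)
    all_goals
      simp only [mem_filter, mem_univ, true_and, Fin.lt_def, Fin.val_castSucc, Fin.val_succ] at h ⊢
      omega

lemma Smat_mul_lap_mul_Tmat_mulVec_Smat_mulVec (v : Fin (n + 1) → ℝ) :
    (Smat n * lap A * Tmat n) *ᵥ (Smat n *ᵥ v) = Smat n *ᵥ (lap A *ᵥ v) := by
  rw [← mulVec_mulVec, ← mulVec_mulVec, Tmat_mulVec_Smat_mulVec, mulVec_sub, lap_mulVec_const,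
    sub_zero]

lemma Smat_mul_lap_mul_Tmat_mulVec_abs_le (hA : A.IsSymm)
    (h1 : ∀ i j k : Fin (n + 1), (j : ℕ) < k → (k : ℕ) < i → A i j ≤ A i k)
    (h2 : ∀ i j k : Fin (n + 1), (i : ℕ) < j → (j : ℕ) < k → A i k ≤ A i j)
    {lam : ℝ} {x : Fin (n + 1) → ℝ} (hx : lap A *ᵥ x = lam • x) :
    (Smat n * lap A * Tmat n) *ᵥ |Smat n *ᵥ x| ≤ lam • |Smat n *ᵥ x| :=
  mulVec_abs_le_of_offDiag_nonpos (fun _ _ => Smat_mul_lap_mul_Tmat_apply_nonpos A hA h1 h2)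
    (by rw [Smat_mul_lap_mul_Tmat_mulVec_Smat_mulVec, hx, mulVec_smul])

lemma exists_monotone_eigvec_of_mulVec_le (hA : A.IsSymm) {lam : ℝ}
    (hmin : ∀ μ : ℝ,
      (∃ x : Fin (n + 1) → ℝ, x ≠ 0 ∧ lap A *ᵥ x = μ • x ∧ ∑ i, x i = 0) → lam ≤ μ)
    {w : Fin n → ℝ} (hw : 0 ≤ w) (hw0 : w ≠ 0)
    (hCw : (Smat n * lap A * Tmat n) *ᵥ w ≤ lam • w) :
    ∃ y : Fin (n + 1) → ℝ, y ≠ 0 ∧ lap A *ᵥ y = lam • y ∧ ∑ i, y i = 0 ∧ Monotone y := by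
  obtain ⟨y, hyw, hys⟩ := exists_Smat_mulVec_eq_and_sum_eq_zero w
  have hmono : Monotone y := monotone_iff_nonneg_Smat_mulVec.2 (hyw ▸ hw)
  have hy0 : y ≠ 0 := by
    rintro rfl
    exact hw0 (by rw [← hyw, mulVec_zero])
  have hSLy : Smat n *ᵥ (lap A *ᵥ y) = (Smat n * lap A * Tmat n) *ᵥ w := by
    rw [← hyw, Smat_mul_lap_mul_Tmat_mulVec_Smat_mulVec]
  have htail (l : Fin n) : 0 < (y ᵥ* Tmat n) l := by
    rw [vecMul_Tmat_apply]
    exact sum_filter_lt_pos_of_monotone hmono hys hy0 (Fin.castSucc_lt_succ (i := l))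
  have hgap : (y ᵥ* Tmat n) ⬝ᵥ (lam • w - (Smat n * lap A * Tmat n) *ᵥ w) ≤ 0 := by
    have := mul_dotProduct_self_le_dotProduct_mulVec (lap_isSymm A hA) (lap_mulVec_const A 1)
      hmin hys
    rw [dotProduct_eq_vecMul_Tmat_dotProduct_Smat_mulVec hys y,
      dotProduct_eq_vecMul_Tmat_dotProduct_Smat_mulVec hys (lap A *ᵥ y), hyw, hSLy] at this
    rw [dotProduct_sub, dotProduct_smul, smul_eq_mul]
    linarith
  have hCw_eq := sub_eq_zero.1 (eq_zero_of_dotProduct_nonpos htail (sub_nonneg.2 hCw) hgap)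
  refine ⟨y, hy0, eq_of_Smat_mulVec_eq_of_sum_eq ?_ ?_, hys, hmono⟩
  · rw [hSLy, ← hCw_eq, mulVec_smul, hyw]
  · simp [sum_mulVec_eq_zero_of_isSymm (lap_isSymm A hA) (lap_mulVec_const A 1), ← mul_sum, hys]

end MonotoneLaplacian

theorem monotone_eigvec_second_smallest_general (n : ℕ) (A : Matrix (Fin (n + 1)) (Fin (n + 1)) ℝ)
    (hA : A.IsSymm)
    (h1 : ∀ i j k : Fin (n + 1), (j : ℕ) < k → (k : ℕ) < i → A i j ≤ A i k)
    (h2 : ∀ i j k : Fin (n + 1), (i : ℕ) < j → (j : ℕ) < k → A i k ≤ A i j)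
    (lam2 : ℝ)
    -- lam2 is the second smallest eigenvalue of the Laplacian: it is the smallest
    -- eigenvalue having an eigenvector orthogonal to the all-ones vector
    (hev : ∃ x : Fin (n + 1) → ℝ, x ≠ 0 ∧ (lap A).mulVec x = lam2 • x ∧ ∑ i, x i = 0)
    (hmin : ∀ μ : ℝ,
      (∃ x : Fin (n + 1) → ℝ, x ≠ 0 ∧ (lap A).mulVec x = μ • x ∧ ∑ i, x i = 0) →
      lam2 ≤ μ) :
    ∃ x : Fin (n + 1) → ℝ, x ≠ 0 ∧ (lap A).mulVec x = lam2 • x ∧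
      (∑ i, x i = 0) ∧ Monotone x := by
  obtain ⟨x, hx0, hx, hxs⟩ := hev
  refine exists_monotone_eigvec_of_mulVec_le A hA hmin (abs_nonneg _) (fun h => hx0 ?_)
    (Smat_mul_lap_mul_Tmat_mulVec_abs_le A hA h1 h2 hx)
  refine eq_of_Smat_mulVec_eq_of_sum_eq ?_ (by simp [hxs])
  rw [(Pi.abs_eq_zero _).1 h, mulVec_zero]

theorem monotone_eigvec_second_smallest (n : ℕ) (A : Matrix (Fin (n + 1)) (Fin (n + 1)) ℝ)
    (hA : A.IsSymm) (hnn : ∀ i j, 0 ≤ A i j) (hdiag : ∀ i, A i i = 0)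
    (h1 : ∀ i j k : Fin (n + 1), (j : ℕ) < k → (k : ℕ) < i → A i j ≤ A i k)
    (h2 : ∀ i j k : Fin (n + 1), (i : ℕ) < j → (j : ℕ) < k → A i k ≤ A i j)
    (lam2 : ℝ)
    -- lam2 is the second smallest eigenvalue of the Laplacian: it is the smallest
    -- eigenvalue having an eigenvector orthogonal to the all-ones vector
    (hev : ∃ x : Fin (n + 1) → ℝ, x ≠ 0 ∧ (lap A).mulVec x = lam2 • x ∧ ∑ i, x i = 0)
    (hmin : ∀ μ : ℝ,
      (∃ x : Fin (n + 1) → ℝ, x ≠ 0 ∧ (lap A).mulVec x = μ • x ∧ ∑ i, x i = 0) →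
      lam2 ≤ μ) :
    ∃ x : Fin (n + 1) → ℝ, x ≠ 0 ∧ (lap A).mulVec x = lam2 • x ∧
      (∑ i, x i = 0) ∧ Monotone x :=
  monotone_eigvec_second_smallest_general n A hA h1 h2 lam2 hev hmin
end

section
/- Let A be a symmetric n×n real matrix with Laplacian A^L (so A^L·1 = 0), and let M = S·A^L·T with S the difference matrix and T the cumulative-sum matrix. Then A^L·T·S = A^L, and consequently the characteristic polynomial of A^L equals t times the characteristic polynomial of M; i.e., the eigenvalues of M are exactly the eigenvalues of A^L with the eigenvalue 0 (from the all-ones kernel vector) removed once. -/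
open Matrix Finset

/-!
Since `A^L 𝟙 = 0`, the rank-one correction in `T S = I - 𝟙 e₀ᵀ` is annihilated, so
`A^L = (A^L T) S`. The characteristic polynomials of `P Q` and `Q P` for an `(n+1) × n` matrix `P`
and an `n × (n+1)` matrix `Q` differ by the factor `X`.
-/

theorem lap_mulVec_one {m : Type*} [Fintype m] [DecidableEq m] (A : Matrix m m ℝ) :
    lap A *ᵥ 1 = 0 := by
  ext i
  simp only [mulVec, dotProduct, Pi.one_apply, mul_one, Pi.zero_apply]
  have off_diag : ∀ j ∈ univ.erase i, lap A i j = -A i j := fun j hj =>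
    if_neg (ne_of_mem_erase hj).symm
  rw [← add_sum_erase _ _ (mem_univ i), sum_congr rfl off_diag, sum_neg_distrib]
  simp [lap, filter_ne']

theorem Smat_apply_s14 (n : ℕ) (k : Fin n) (j : Fin (n + 1)) :
    Smat n k j = (if (j : ℕ) = k + 1 then 1 else 0) - (if (j : ℕ) = k then 1 else 0) := by
  simp only [Smat, of_apply]
  split_ifs <;> first | omega | norm_num

theorem Tmat_mul_Smat_apply (n : ℕ) (i j : Fin (n + 1)) :
    (Tmat n * Smat n) i j = (if (j : ℕ) = i then 1 else 0) - (if (j : ℕ) = 0 then 1 else 0) := by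
  set g : ℕ → ℝ := fun k => if (j : ℕ) = k then 1 else 0
  calc (Tmat n * Smat n) i j
      = ∑ k ∈ range n, if k < i then g (k + 1) - g k else 0 := by
        simp only [mul_apply, Tmat, of_apply, Smat_apply_s14, ite_mul, one_mul, zero_mul]
        exact Fin.sum_univ_eq_sum_range (fun k => if k < i then g (k + 1) - g k else 0) n
    _ = ∑ k ∈ range i, (g (k + 1) - g k) := by
        rw [← Finset.sum_filter]
        congr 1
        ext k
        simp only [mem_filter, mem_range]
        omega
    _ = g i - g 0 := Finset.sum_range_sub g i

theorem Tmat_mul_Smat (n : ℕ) :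
    Tmat n * Smat n = 1 - vecMulVec 1 (Pi.single 0 1) := by
  ext i j
  rw [Tmat_mul_Smat_apply, Matrix.sub_apply, one_apply, vecMulVec_apply, Pi.single_apply,
    Pi.one_apply, one_mul]
  simp only [Fin.ext_iff, Fin.val_zero, eq_comm]

theorem lap_mul_Tmat_mul_Smat (n : ℕ) (A : Matrix (Fin (n + 1)) (Fin (n + 1)) ℝ) :
    lap A * Tmat n * Smat n = lap A := by
  rw [Matrix.mul_assoc, Tmat_mul_Smat, Matrix.mul_sub, Matrix.mul_one, mul_vecMulVec,
    lap_mulVec_one, zero_vecMulVec, sub_zero]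

theorem lap_charpoly_factor_general (n : ℕ) (A : Matrix (Fin (n + 1)) (Fin (n + 1)) ℝ) :
    lap A * Tmat n * Smat n = lap A ∧
    (lap A).charpoly = Polynomial.X * (Smat n * lap A * Tmat n).charpoly := by
  refine ⟨lap_mul_Tmat_mul_Smat n A, ?_⟩
  conv_lhs => rw [← lap_mul_Tmat_mul_Smat n A]
  rw [charpoly_mul_comm_of_le _ _ (by simp), Matrix.mul_assoc, Fintype.card_fin,
    Fintype.card_fin, Nat.add_sub_cancel_left, pow_one]

theorem lap_charpoly_factor (n : ℕ) (A : Matrix (Fin (n + 1)) (Fin (n + 1)) ℝ)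
    (hA : A.IsSymm) :
    lap A * Tmat n * Smat n = lap A ∧
    (lap A).charpoly = Polynomial.X * (Smat n * lap A * Tmat n).charpoly :=
  lap_charpoly_factor_general n A
end
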